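/- arXiv:0908.2590 — 2 statements merged into one kernel-verified Lean document; each statement's English description precedes it below -/
import Mathlib

section
/- Let (S, d) be a metric space, let δ > 0, and let V be a countable subset of S that is dense in itself. Then there exists a graph with vertex set V that is geometrically existentially closed at level δ and has threshold δ (i.e., a geometric δ-graph with vertex set V). -/
open MeasureTheory Metric

/-- Pairs of distinct points of `V` at distance less than `δ`: potential edges. -/
def LargEdges {S : Type*} [MetricSpace S] (V : Set S) (δ : ℝ) : Set (Sym2 V) :=
  {e | ¬ e.IsDiag ∧ ∀ u v : V, e = s(u, v) → dist (u : S) (v : S) < δ}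

/-- The graph on `V` determined by a sample `ω` of the LARG model. -/
def largGraph {S : Type*} [MetricSpace S] (V : Set S) (δ : ℝ)
    (ω : LargEdges V δ → Bool) : SimpleGraph V where
  Adj u v := ∃ h : s(u, v) ∈ LargEdges V δ, ω ⟨s(u, v), h⟩ = true
  symm := by
    constructor
    intro u v h
    beta_reduce at h ⊢
    rwa [Sym2.eq_swap]
  loopless := by
    constructor
    rintro u ⟨h, -⟩
    exact h.1 (by simp)

/-- `G` is geometrically existentially closed at level `δ`. -/
def IsGEC {S : Type*} [MetricSpace S] {V : Set S} (G : SimpleGraph V) (δ : ℝ) : Prop :=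
  ∀ δ' : ℝ, 0 < δ' → δ' < δ → ∀ x : V, ∀ A B : Finset V,
    Disjoint A B → x ∉ A → x ∉ B →
    (∀ u : V, u ∈ A ∨ u ∈ B → dist (u : S) (x : S) < δ) →
    ∃ z : V, z ∉ A ∧ z ∉ B ∧ z ≠ x ∧
      (∀ a ∈ A, G.Adj z a) ∧ (∀ b ∈ B, ¬ G.Adj z b) ∧
      (∀ u : V, u ∈ A ∨ u ∈ B → dist (u : S) (z : S) < δ) ∧ dist (x : S) (z : S) < δ'

/-- `G` has threshold `δ`: adjacent vertices are at distance less than `δ`. -/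
def HasThreshold {S : Type*} [MetricSpace S] {V : Set S} (G : SimpleGraph V) (δ : ℝ) : Prop :=
  ∀ u v : V, G.Adj u v → dist (u : S) (v : S) < δ

/-- A geometric `δ`-graph: `δ`-g.e.c. with threshold `δ`. -/
def IsGeometricGraph {S : Type*} [MetricSpace S] {V : Set S} (G : SimpleGraph V) (δ : ℝ) : Prop :=
  IsGEC G δ ∧ HasThreshold G δ

/-- A set is dense in itself. -/
def DenseInItself {S : Type*} [MetricSpace S] (V : Set S) : Prop :=
  ∀ x ∈ V, ∀ ε : ℝ, 0 < ε → ∃ y ∈ V, y ≠ x ∧ dist y x < ε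

/-- A graph is existentially closed. -/
def IsEC {α : Type*} (G : SimpleGraph α) : Prop :=
  ∀ A B : Finset α, Disjoint A B →
    ∃ z : α, z ∉ A ∧ z ∉ B ∧ (∀ a ∈ A, G.Adj z a) ∧ (∀ b ∈ B, ¬ G.Adj z b)

/-- A metrically convex set. -/
def MetricConvex {S : Type*} [MetricSpace S] (C : Set S) : Prop :=
  ∀ x ∈ C, ∀ y ∈ C, ∃ z ∈ C, dist x z + dist z y = dist x y

/-- `f : V → W` is a step-isometry at level `(δ, γ)`. -/
def IsStepIsometry {S T : Type*} [MetricSpace S] [MetricSpace T]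
    {V : Set S} {W : Set T} (f : V → W) (δ γ : ℝ) : Prop :=
  Function.Surjective f ∧
    ∀ u v : V, ⌊dist (u : S) (v : S) / δ⌋ = ⌊dist ((f u : T)) ((f v : T)) / γ⌋

/-- Quotient of `v` w.r.t. offset `δ` and anchor `v₀`. -/
noncomputable def quot' (δ v₀ v : ℝ) : ℤ := ⌊(v - v₀) / δ⌋

/-- Representative of `v` w.r.t. offset `δ` and anchor `v₀`. -/
noncomputable def repr' (δ v₀ v : ℝ) : ℝ := v - v₀ - δ * ⌊(v - v₀) / δ⌋

/-!
Enumerate the countably many requirements `(q, x, A, B)` of the g.e.c. property, with `q` a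
positive rational radius, and answer them one after another: the `n`-th requirement gets a
witness `z n` near `x` that is new (distinct from all earlier witnesses) and lies outside all sets
`A m`, `B m` with `m ≤ n`, and the only edges are those joining `z n` to `A n`. Freshness makes
sure that no edge put in for one requirement spoils another one, and every edge has length less
than `δ` because the witnesses are chosen within distance `δ` of their sets `A`. Fresh witnesses
always exist since a set dense in itself meets every ball around one of its points in infinitely
many points.
-/

open Filter Topology Function

section Witnesses

variable {α : Type*}

theorem exists_injective_forall_mem_not_mem (C : ℕ → Set α) (hC : ∀ n, (C n).Infinite)
    (F : ℕ → Finset α) : ∃ z : ℕ → α, Injective z ∧ ∀ n, z n ∈ C n ∧ z n ∉ F n := by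
  classical
  have hfresh : ∀ n (s : Finset α), ∃ a ∈ C n, a ∉ F n ∧ a ∉ s := fun n s => by
    obtain ⟨a, ha, has⟩ := ((hC n).sdiff ((F n).finite_toSet.union s.finite_toSet)).nonempty
    exact ⟨a, ha, fun h => has (.inl h), fun h => has (.inr h)⟩
  choose pick hpickC hpickF hpick_not_mem using hfresh
  -- `used n` holds the first `n` chosen points
  let used : ℕ → Finset α := fun n =>
    Nat.rec (motive := fun _ => Finset α) ∅ (fun k s => insert (pick k s) s) n
  have used_mono : Monotone used := monotone_nat_of_le_succ fun n => Finset.subset_insert _ _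
  have mem_used {m n : ℕ} (h : m < n) : pick m (used m) ∈ used n :=
    used_mono h (Finset.mem_insert_self _ _)
  refine ⟨fun n => pick n (used n), Injective.of_lt_imp_ne fun m n h heq => ?_,
    fun n => ⟨hpickC _ _, hpickF _ _⟩⟩
  exact hpick_not_mem n (used n) (heq ▸ mem_used h)

namespace SimpleGraph

def ofWitnesses (z : ℕ → α) (A : ℕ → Finset α) : SimpleGraph α :=
  fromEdgeSet (⋃ n, (fun a => s(z n, a)) '' A n)

variable {z : ℕ → α} {A : ℕ → Finset α} {u v : α}

theorem ofWitnesses_adj :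
    (ofWitnesses z A).Adj u v ↔ u ≠ v ∧ ∃ n, (u = z n ∧ v ∈ A n) ∨ (v = z n ∧ u ∈ A n) := by
  simp only [ofWitnesses, fromEdgeSet_adj, Set.mem_iUnion, Set.mem_image, Sym2.eq_iff]
  constructor
  · rintro ⟨⟨n, a, ha, ⟨rfl, rfl⟩ | ⟨rfl, rfl⟩⟩, huv⟩
    exacts [⟨huv, n, .inl ⟨rfl, ha⟩⟩, ⟨huv, n, .inr ⟨rfl, ha⟩⟩]
  · rintro ⟨huv, n, ⟨rfl, hv⟩ | ⟨rfl, hu⟩⟩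
    exacts [⟨⟨n, v, hv, .inl ⟨rfl, rfl⟩⟩, huv⟩, ⟨⟨n, u, hu, .inr ⟨rfl, rfl⟩⟩, huv⟩]

theorem ofWitnesses_adj_of_mem {n : ℕ} (hn : z n ∉ A n) (ha : u ∈ A n) :
    (ofWitnesses z A).Adj (z n) u :=
  ofWitnesses_adj.2 ⟨fun h => hn (h ▸ ha), n, .inl ⟨rfl, ha⟩⟩

theorem not_ofWitnesses_adj_of_mem {B : ℕ → Finset α} (hz : Injective z)
    (hAB : ∀ n, Disjoint (A n) (B n)) (hfresh : ∀ m n, m ≤ n → z n ∉ A m ∧ z n ∉ B m)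
    {n : ℕ} (hu : u ∈ B n) : ¬ (ofWitnesses z A).Adj (z n) u := by
  intro hadj
  obtain ⟨-, m, ⟨hnm, huA⟩ | ⟨rfl, hnA⟩⟩ := ofWitnesses_adj.1 hadj
  · obtain rfl := hz hnm
    exact Finset.disjoint_left.1 (hAB n) huA hu
  · rcases le_total m n with h | h
    · exact (hfresh m n h).1 hnA
    · exact (hfresh n m h).2 hu

end SimpleGraph

theorem exists_simpleGraph_with_witnesses {ι : Type*} (R : Set ι) (hR : R.Countable)
    (A B : ι → Finset α) (C : ι → Set α)
    (hAB : ∀ i ∈ R, Disjoint (A i) (B i)) (hC : ∀ i ∈ R, (C i).Infinite) :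
    ∃ G : SimpleGraph α,
      (∀ i ∈ R, ∃ z ∈ C i, z ∉ A i ∧ z ∉ B i ∧ (∀ a ∈ A i, G.Adj z a) ∧ ∀ b ∈ B i, ¬ G.Adj z b) ∧
      ∀ u v, G.Adj u v → ∃ i ∈ R, (u ∈ C i ∧ v ∈ A i) ∨ (v ∈ C i ∧ u ∈ A i) := by
  classical
  rcases R.eq_empty_or_nonempty with rfl | hR_ne
  · exact ⟨⊥, by simp, by simp⟩
  obtain ⟨r, rfl⟩ := hR.exists_eq_range hR_ne
  obtain ⟨z, hz, hzCF⟩ := exists_injective_forall_mem_not_mem (C ∘ r)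
    (fun n => hC _ ⟨n, rfl⟩) fun n => (Finset.range (n + 1)).biUnion fun m => A (r m) ∪ B (r m)
  have hfresh (m n : ℕ) (h : m ≤ n) : z n ∉ A (r m) ∧ z n ∉ B (r m) := by
    have := (hzCF n).2
    simp only [Finset.mem_biUnion, Finset.mem_range, Finset.mem_union, not_exists, not_and,
      not_or] at this
    exact this m (by omega)
  refine ⟨SimpleGraph.ofWitnesses z (A ∘ r), ?_, fun u v huv => ?_⟩
  · rintro _ ⟨n, rfl⟩
    obtain ⟨hzA, hzB⟩ := hfresh n n le_rfl
    exact ⟨z n, (hzCF n).1, hzA, hzB, fun a => SimpleGraph.ofWitnesses_adj_of_mem (A := A ∘ r) hzA,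
      fun b => SimpleGraph.not_ofWitnesses_adj_of_mem (B := B ∘ r) hz
        (fun n => hAB _ ⟨n, rfl⟩) hfresh⟩
  · obtain ⟨-, n, h⟩ := SimpleGraph.ofWitnesses_adj.1 huv
    refine ⟨r n, ⟨n, rfl⟩, ?_⟩
    rcases h with ⟨rfl, hv⟩ | ⟨rfl, hu⟩
    exacts [.inl ⟨(hzCF n).1, hv⟩, .inr ⟨(hzCF n).1, hu⟩]

end Witnesses

theorem setOf_forall_dist_lt_mem_nhds {X : Type*} [PseudoMetricSpace X] {T : Set X}
    (hT : T.Finite) {δ : ℝ} {x : X} (hx : ∀ u ∈ T, dist u x < δ) :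
    {z | ∀ u ∈ T, dist u z < δ} ∈ 𝓝 x :=
  (eventually_all_finite hT).2 fun u hu =>
    ((continuous_const.dist continuous_id).tendsto x).eventually_lt_const (hx u hu)

theorem DenseInItself.infinite_of_mem_nhds {S : Type*} [MetricSpace S] {V : Set S}
    (hV : DenseInItself V) {x : V} {U : Set V} (hU : U ∈ 𝓝 x) : U.Infinite := by
  have : (𝓝[≠] x).NeBot := by
    rw [← mem_closure_iff_nhdsWithin_neBot, Metric.mem_closure_iff]
    intro ε hε
    obtain ⟨y, hyV, hyx, hy⟩ := hV x x.2 ε hε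
    exact ⟨⟨y, hyV⟩, fun h => hyx (congrArg Subtype.val h), by rw [dist_comm]; exact hy⟩
  exact _root_.infinite_of_mem_nhds x hU

theorem exists_geometric_graph_general {S : Type*} [MetricSpace S] (δ : ℝ)
    (V : Set S) (hVc : V.Countable) (hVd : DenseInItself V) :
    ∃ G : SimpleGraph V, IsGeometricGraph G δ := by
  have : Countable V := hVc.to_subtype
  let near (A B : Finset V) : Set V := {z | ∀ u, u ∈ A ∨ u ∈ B → dist u z < δ}
  let R : Set (ℚ × V × Finset V × Finset V) :=
    {r | 0 < r.1 ∧ Disjoint r.2.2.1 r.2.2.2 ∧ r.2.1 ∈ near r.2.2.1 r.2.2.2}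
  let C (r : ℚ × V × Finset V × Finset V) : Set V :=
    (ball r.2.1 r.1 ∩ near r.2.2.1 r.2.2.2) \ {r.2.1}
  have hC (r) (hr : r ∈ R) : (C r).Infinite :=
    have hnear : near r.2.2.1 r.2.2.2 ∈ 𝓝 r.2.1 :=
      setOf_forall_dist_lt_mem_nhds (r.2.2.1.finite_toSet.union r.2.2.2.finite_toSet) hr.2.2
    (hVd.infinite_of_mem_nhds (inter_mem (ball_mem_nhds _ (by exact_mod_cast hr.1))
      hnear)).sdiff (Set.finite_singleton _)
  obtain ⟨G, hwit, hadj⟩ :=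
    exists_simpleGraph_with_witnesses R R.to_countable (·.2.2.1) (·.2.2.2) C (fun r hr => hr.2.1) hC
  refine ⟨G, fun δ' hδ' _ x A B hAB _ _ hdist => ?_, fun u v huv => ?_⟩
  · obtain ⟨q, hq, hqδ'⟩ := exists_rat_btwn hδ'
    obtain ⟨z, ⟨⟨hzx, hzd⟩, hz_ne⟩, hzA, hzB, hadjA, hnadjB⟩ :=
      hwit (q, x, A, B) ⟨by exact_mod_cast hq, hAB, hdist⟩
    exact ⟨z, hzA, hzB, hz_ne, hadjA, hnadjB, hzd, (dist_comm _ _).trans_lt (hzx.trans hqδ')⟩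
  · obtain ⟨r, -, ⟨⟨⟨-, hu⟩, -⟩, hv⟩ | ⟨⟨⟨-, hv⟩, -⟩, hu⟩⟩ := hadj u v huv
    exacts [dist_comm u v ▸ hu v (.inl hv), hv u (.inl hu)]

theorem exists_geometric_graph {S : Type*} [MetricSpace S] (δ : ℝ) (hδ : 0 < δ)
    (V : Set S) (hVc : V.Countable) (hVd : DenseInItself V) :
    ∃ G : SimpleGraph V, IsGeometricGraph G δ :=
  exists_geometric_graph_general δ V hVc hVd
end

section
/- Let (S, d) be a metric space, δ > 0, and let U ⊆ S be such that U ⊆ B_δ(x) for some x ∈ U, where B_δ(x) is the open ball of radius δ about x. Then every graph with vertex set U that is geometrically existentially closed at level δ is existentially closed. -/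
open MeasureTheory Metric

/- The centre `x` may itself lie in `A ∪ B`, so first use the g.e.c. property at `x`
(with nothing to be adjacent to) to find a vertex `z ∉ A ∪ B` so close to `x` that `A ∪ B` still
lies in `B_δ(z)`; the g.e.c. property at `z` then yields the required vertex. -/

open scoped Topology in
theorem exists_pos_forall_dist_lt {S ι : Type*} [PseudoMetricSpace S] (s : Finset ι) (p : ι → S)
    {x : S} {δ : ℝ} (h : ∀ i ∈ s, dist (p i) x < δ) :
    ∃ ε > 0, ∀ z, dist z x < ε → ∀ i ∈ s, dist (p i) z < δ := by
  have hnhds : ∀ᶠ z in 𝓝 x, ∀ i ∈ s, dist (p i) z < δ :=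
    (Filter.eventually_all_finset s).2 fun i hi =>
      (continuous_const.dist continuous_id).continuousAt.eventually_lt continuousAt_const (h i hi)
  exact Metric.eventually_nhds_iff.1 hnhds

namespace IsGEC

variable {S : Type*} [MetricSpace S] {V : Set S} {G : SimpleGraph V} {δ : ℝ}

theorem exists_notMem_dist_lt (hG : IsGEC G δ) (hδ : 0 < δ) (x : V) {C : Finset V}
    (hC : ∀ u ∈ C, dist (u : S) x < δ) {ε : ℝ} (hε : 0 < ε) :
    ∃ z, z ∉ C ∧ dist (x : S) z < ε := by
  classical
  obtain ⟨z, -, hzC, hzx, -, -, -, hxz⟩ :=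
    hG (min ε (δ / 2)) (lt_min hε (half_pos hδ)) ((min_le_right _ _).trans_lt (half_lt_self hδ))
      x ∅ (C.erase x) (Finset.disjoint_empty_left _) (Finset.notMem_empty _)
      (Finset.notMem_erase _ _) fun u hu => hC u (Finset.mem_of_mem_erase (by simpa using hu))
  exact ⟨z, fun hz => hzC (Finset.mem_erase.2 ⟨hzx, hz⟩), hxz.trans_le (min_le_left _ _)⟩

theorem exists_adj_of_forall_dist_lt (hG : IsGEC G δ) (hδ : 0 < δ) (x : V) {A B : Finset V}
    (hAB : Disjoint A B) (hx : ∀ u : V, u ∈ A ∨ u ∈ B → dist (u : S) x < δ) :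
    ∃ z, z ∉ A ∧ z ∉ B ∧ (∀ a ∈ A, G.Adj z a) ∧ (∀ b ∈ B, ¬ G.Adj z b) := by
  classical
  have hx' : ∀ u ∈ A ∪ B, dist (u : S) x < δ := fun u hu => hx u (Finset.mem_union.1 hu)
  obtain ⟨ε, hε, hnear⟩ := exists_pos_forall_dist_lt (A ∪ B) ((↑) : V → S) hx'
  obtain ⟨z, hzAB, hxz⟩ := hG.exists_notMem_dist_lt hδ x hx' hε
  have hz : ∀ u : V, u ∈ A ∨ u ∈ B → dist (u : S) z < δ := fun u hu =>
    hnear z (by rwa [dist_comm]) u (Finset.mem_union.2 hu)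
  obtain ⟨w, hwA, hwB, -, hwA', hwB', -⟩ :=
    hG (δ / 2) (half_pos hδ) (half_lt_self hδ) z A B hAB
      (fun h => hzAB (Finset.mem_union_left _ h)) (fun h => hzAB (Finset.mem_union_right _ h)) hz
  exact ⟨w, hwA, hwB, hwA', hwB'⟩

end IsGEC

theorem gec_in_ball_is_ec {S : Type*} [MetricSpace S] (δ : ℝ) (hδ : 0 < δ)
    (U : Set S) (x : S) (hx : x ∈ U) (hU : U ⊆ Metric.ball x δ)
    (G : SimpleGraph U) (hG : IsGEC G δ) : IsEC G :=
  fun _ _ hAB => hG.exists_adj_of_forall_dist_lt hδ ⟨x, hx⟩ hAB fun u _ => hU u.2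
end
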